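/- arXiv:2206.07096 — 2 statements merged into one kernel-verified Lean document; each statement's English description precedes it below -/
import Mathlib

section
/- (Root locus stability for small gain) Let G(z) = −α/(z−1)·s(z), where α > 0 and s is a rational function that is stable (all poles in the open unit disk), minimum-phase (all zeros in the open unit disk) and proper, with s(1) = 1. Then for all ε > 0 sufficiently small, all zeros of 1 − εG(z) lie in the open unit disk. -/
open Polynomial

lemma multiset_exists_bound (s : Multiset ℝ) (h : ∀ x ∈ s, x < 1) :
    ∃ r : ℝ, 0 ≤ r ∧ r < 1 ∧ ∀ x ∈ s, x ≤ r := by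
  induction s using Multiset.induction_on with
  | empty => exact ⟨0, le_refl _, by norm_num, by simp⟩
  | cons a s ih =>
    obtain ⟨r, hr0, hr1, hrb⟩ := ih (fun x hx => h x (Multiset.mem_cons_of_mem hx))
    refine ⟨max (max a r) 0, le_max_right _ _, ?_, ?_⟩
    · have ha := h a (Multiset.mem_cons_self a s)
      simp only [max_lt_iff]
      exact ⟨⟨ha, hr1⟩, by norm_num⟩
    · intro x hx
      rcases Multiset.mem_cons.mp hx with rfl | hx
      · exact le_max_of_le_left (le_max_left _ _)
      · exact le_max_of_le_left (le_max_of_le_right (hrb x hx))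

lemma le_multiset_prod' (s : Multiset ℝ) (c : ℝ) (hc : 0 ≤ c) (h : ∀ x ∈ s, c ≤ x) :
    c ^ Multiset.card s ≤ s.prod := by
  induction s using Multiset.induction_on with
  | empty => simp
  | cons a s ih =>
    have h1 := ih (fun x hx => h x (Multiset.mem_cons_of_mem hx))
    have ha := h a (Multiset.mem_cons_self a s)
    simp only [Multiset.card_cons, Multiset.prod_cons, pow_succ]
    rw [mul_comm (c ^ Multiset.card s) c]
    exact mul_le_mul ha h1 (pow_nonneg hc _) (le_trans hc ha)

lemma multiset_prod_le' (s : Multiset ℝ) (C : ℝ) (h0 : ∀ x ∈ s, 0 ≤ x) (h : ∀ x ∈ s, x ≤ C) :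
    s.prod ≤ C ^ Multiset.card s := by
  induction s using Multiset.induction_on with
  | empty => simp
  | cons a s ih =>
    have h1 := ih (fun x hx => h0 x (Multiset.mem_cons_of_mem hx))
      (fun x hx => h x (Multiset.mem_cons_of_mem hx))
    have ha := h a (Multiset.mem_cons_self a s)
    have ha0 := h0 a (Multiset.mem_cons_self a s)
    have hprod0 : 0 ≤ s.prod := Multiset.prod_nonneg (fun x hx => h0 x (Multiset.mem_cons_of_mem hx))
    simp only [Multiset.card_cons, Multiset.prod_cons, pow_succ]
    rw [mul_comm (C ^ Multiset.card s) C]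
    exact mul_le_mul ha h1 hprod0 (le_trans ha0 ha)

lemma abs_eval_eq (f : Polynomial ℂ) (z : ℂ) :
    ‖f.eval z‖
      = ‖f.leadingCoeff‖ * ((f.roots.map (fun μ => ‖z - μ‖)).prod) := by
  conv_lhs => rw [(IsAlgClosed.splits f).eq_prod_roots]
  rw [eval_mul, eval_C, norm_mul, eval_multiset_prod, Multiset.map_map]
  simp [Function.comp]
  left
  induction f.roots using Multiset.induction_on <;> simp [*]

lemma key_bound (p q : Polynomial ℂ) (hp : p ≠ 0) (hq : q ≠ 0)
    (hpstable : ∀ μ ∈ p.roots, ‖μ‖ < 1)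
    (hqstable : ∀ μ ∈ q.roots, ‖μ‖ < 1)
    (hproper : p.degree ≤ q.degree) :
    ∃ M : ℝ, 0 ≤ M ∧ ∀ z : ℂ, 1 ≤ ‖z‖ →
      q.eval z ≠ 0 ∧ ‖p.eval z‖ ≤ M * ‖q.eval z‖ := by
  obtain ⟨r, hr0, hr1, hrb⟩ := multiset_exists_bound (q.roots.map (‖·‖))
    (by intro x hx; obtain ⟨μ, hμ, rfl⟩ := Multiset.mem_map.mp hx; exact hqstable μ hμ)
  have hrb' : ∀ ν ∈ q.roots, ‖ν‖ ≤ r := fun ν hν =>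
    hrb _ (Multiset.mem_map_of_mem _ hν)
  set a := ‖p.leadingCoeff‖ with ha_def
  set b := ‖q.leadingCoeff‖ with hb_def
  have ha0 : 0 < a := by
    simpa [ha_def] using (norm_pos_iff.mpr (leadingCoeff_ne_zero.mpr hp))
  have hb0 : 0 < b := by
    simpa [hb_def] using (norm_pos_iff.mpr (leadingCoeff_ne_zero.mpr hq))
  set m := Multiset.card p.roots with hm_def
  set n := Multiset.card q.roots with hn_def
  have hmn : m ≤ n := by
    have h1 : m = p.natDegree := (splits_iff_card_roots.mp (IsAlgClosed.splits p))
    have h2 : n = q.natDegree := (splits_iff_card_roots.mp (IsAlgClosed.splits q))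
    rw [h1, h2]
    exact natDegree_le_natDegree hproper
  have h1r : 0 < 1 - r := by linarith
  refine ⟨a * 2 ^ m / (b * (1 - r) ^ n), by positivity, ?_⟩
  intro z hz
  have hz0 : 0 < ‖z‖ := lt_of_lt_of_le one_pos hz
  -- lower bound for q
  have hqlow : b * ((1 - r) * ‖z‖) ^ n ≤ ‖q.eval z‖ := by
    rw [abs_eval_eq q z]
    refine mul_le_mul_of_nonneg_left ?_ hb0.le
    refine le_trans ?_ (le_multiset_prod' _ ((1 - r) * ‖z‖) (by positivity) ?_)
    · rw [Multiset.card_map]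
    · intro x hx
      obtain ⟨ν, hν, rfl⟩ := Multiset.mem_map.mp hx
      have h1 : ‖z‖ - ‖ν‖ ≤ ‖z - ν‖ := by
        simpa using norm_sub_norm_le z ν
      have h2 : ‖ν‖ ≤ r := hrb' ν hν
      have h3 : r ≤ r * ‖z‖ := le_mul_of_one_le_right hr0 hz
      nlinarith
  have hqpos : 0 < ‖q.eval z‖ :=
    lt_of_lt_of_le (by positivity) hqlow
  refine ⟨fun h => by simp [h] at hqpos, ?_⟩
  -- upper bound for p
  have hpup : ‖p.eval z‖ ≤ a * (2 * ‖z‖) ^ m := by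
    rw [abs_eval_eq p z]
    refine mul_le_mul_of_nonneg_left ?_ ha0.le
    refine le_trans (multiset_prod_le' _ (2 * ‖z‖) ?_ ?_) ?_
    · intro x hx
      obtain ⟨μ, hμ, rfl⟩ := Multiset.mem_map.mp hx
      exact norm_nonneg _
    · intro x hx
      obtain ⟨μ, hμ, rfl⟩ := Multiset.mem_map.mp hx
      have h1 : ‖z - μ‖ ≤ ‖z‖ + ‖μ‖ := by
        simpa [sub_eq_add_neg] using norm_add_le z (-μ)
      have h2 : ‖μ‖ < 1 := hpstable μ hμ
      nlinarith
    · rw [Multiset.card_map]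
  -- combine
  have hzpow : ‖z‖ ^ m ≤ ‖z‖ ^ n := pow_le_pow_right₀ hz hmn
  have key : a * (2 * ‖z‖) ^ m
      ≤ (a * 2 ^ m / (b * (1 - r) ^ n)) * (b * ((1 - r) * ‖z‖) ^ n) := by
    rw [mul_pow, mul_pow]
    have heq : (1 - r) ^ n * ‖z‖ ^ n * b / (b * (1 - r) ^ n)
        = ‖z‖ ^ n := by
      field_simp
    rw [div_mul_eq_mul_div, mul_comm b ((1-r)^n * ‖z‖ ^ n), mul_div_assoc, heq,
      ← mul_assoc]
    exact mul_le_mul_of_nonneg_left hzpow (by positivity)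
  calc ‖p.eval z‖ ≤ a * (2 * ‖z‖) ^ m := hpup
    _ ≤ _ := key
    _ ≤ _ := mul_le_mul_of_nonneg_left hqlow (by positivity)

/-- Root-locus stability for small gain: let `G(z) = (−α/(z−1))·s(z)` with `α > 0`
and `s = p/q` stable, minimum-phase, proper (`roots of p and q in the open unit
disk`, `deg p ≤ deg q`), with `s(1) = 1`.  Then for all sufficiently small `ε > 0`,
all zeros of `1 − εG(z)`, i.e. all roots of `(z−1)q(z) + αε·p(z)`, lie in the open
unit disk. -/
theorem root_locus_small_gain (α : ℝ) (hα : 0 < α) (p q : Polynomial ℂ)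
    (hp : p ≠ 0) (hq : q ≠ 0)
    (hpstable : ∀ μ ∈ p.roots, ‖μ‖ < 1)
    (hqstable : ∀ μ ∈ q.roots, ‖μ‖ < 1)
    (hproper : p.degree ≤ q.degree)
    (hs1 : p.eval 1 = q.eval 1) :
    ∃ ε₀ : ℝ, 0 < ε₀ ∧ ∀ ε : ℝ, 0 < ε → ε < ε₀ →
      ∀ z ∈ ((Polynomial.X - 1) * q + Polynomial.C ((α * ε : ℝ) : ℂ) * p).roots,
        ‖z‖ < 1 := by
  obtain ⟨M, hM0, hMb⟩ := key_bound p q hp hq hpstable hqstable hproper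
  have hq1 : q.eval 1 ≠ 0 := by
    intro h
    have : (1 : ℂ) ∈ q.roots := by
      rw [mem_roots']; exact ⟨hq, h⟩
    have := hqstable 1 this
    simp at this
  have hcont : ContinuousAt (fun z : ℂ => p.eval z / q.eval z) 1 :=
    ContinuousAt.div (Polynomial.continuousAt p) (Polynomial.continuousAt q) hq1
  have hs1' : p.eval 1 / q.eval 1 = 1 := by rw [hs1]; exact div_self hq1
  obtain ⟨δ, hδ0, hδ⟩ := Metric.continuousAt_iff.mp hcont (1/2) (by norm_num)
  refine ⟨min (δ / (α * (M + 1))) (4 / (9 * α)), lt_min (by positivity) (by positivity), ?_⟩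
  intro ε hε hεlt z hz
  by_contra hcon
  push_neg at hcon
  obtain ⟨hqz, hpq⟩ := hMb z hcon
  rw [mem_roots'] at hz
  obtain ⟨-, hz'⟩ := hz
  have heq : (z - 1) * q.eval z + ((α * ε : ℝ) : ℂ) * p.eval z = 0 := by
    simpa [IsRoot, eval_add, eval_mul, eval_sub, eval_X, eval_one, eval_C] using hz'
  set w : ℂ := p.eval z / q.eval z with hw_def
  push_cast at heq
  have hz1 : z = 1 - ((α * ε : ℝ) : ℂ) * w := by
    push_cast
    field_simp [hw_def]
    linear_combination (eval z q)⁻¹ * heq + (1 - z) * mul_inv_cancel₀ hqz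
  set t : ℝ := α * ε with ht_def
  have ht0 : 0 < t := mul_pos hα hε
  have htM : t * (M + 1) < δ := by
    have h1 : ε < δ / (α * (M + 1)) := lt_of_lt_of_le hεlt (min_le_left _ _)
    have h2 : 0 < α * (M + 1) := by positivity
    calc t * (M + 1) = ε * (α * (M + 1)) := by ring
      _ < (δ / (α * (M + 1))) * (α * (M + 1)) := by
          exact mul_lt_mul_of_pos_right h1 h2
      _ = δ := by field_simp
  have ht49 : t < 4 / 9 := by
    have h1 : ε < 4 / (9 * α) := lt_of_lt_of_le hεlt (min_le_right _ _)
    calc t = α * ε := rfl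
      _ < α * (4 / (9 * α)) := mul_lt_mul_of_pos_left h1 hα
      _ = 4 / 9 := by field_simp
  -- |z - 1| = t * |w| ≤ t * M < δ
  have habsw : ‖w‖ ≤ M := by
    rw [hw_def, norm_div]
    rw [div_le_iff₀ (norm_pos_iff.mpr hqz)]
    exact hpq
  have hdist : dist z 1 < δ := by
    rw [Complex.dist_eq, hz1]
    have : (1 : ℂ) - (1 - ((t : ℝ) : ℂ) * w) = ((t : ℝ) : ℂ) * w := by ring
    rw [show (1 : ℂ) - ((t:ℝ):ℂ) * w - 1 = -(((t:ℝ):ℂ) * w) by ring]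
    rw [norm_neg, norm_mul, Complex.norm_real, Real.norm_eq_abs, abs_of_pos ht0]
    calc t * ‖w‖ ≤ t * M := mul_le_mul_of_nonneg_left habsw ht0.le
      _ < t * (M + 1) := by nlinarith
      _ < δ := htM
  have hwnear : ‖w - 1‖ < 1/2 := by
    have := hδ hdist
    rw [hs1'] at this
    simpa [Complex.dist_eq, hw_def] using this
  -- Re w > 1/2 and |w| < 3/2
  have hwre : 1/2 < w.re := by
    have h1 : |w.re - 1| ≤ ‖w - 1‖ := by
      simpa using Complex.abs_re_le_norm (w - 1)
    have := abs_lt.mp (lt_of_le_of_lt h1 hwnear)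
    linarith [this.1]
  have hwabs : ‖w‖ < 3/2 := by
    calc ‖w‖ = ‖(w - 1) + 1‖ := by ring_nf
      _ ≤ ‖w - 1‖ + ‖1‖ := norm_add_le _ _
      _ < 3/2 := by simpa using by linarith [hwnear]
  -- normSq z < 1
  have hnsq : Complex.normSq w < 9/4 := by
    have := Complex.sq_norm w
    nlinarith [norm_nonneg w]
  have hzsq : Complex.normSq z < 1 := by
    rw [hz1]
    have hre : (1 - ((t:ℝ):ℂ) * w).re = 1 - t * w.re := by simp
    have him : (1 - ((t:ℝ):ℂ) * w).im = -(t * w.im) := by simp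
    rw [Complex.normSq_apply, hre, him]
    have hnw : Complex.normSq w = w.re^2 + w.im^2 := by
      rw [Complex.normSq_apply]; ring
    have hnsq' : w.re^2 + w.im^2 < 9/4 := by rw [← hnw]; exact hnsq
    nlinarith [mul_pos ht0 (by linarith : (0:ℝ) < 2 * w.re - 1),
      mul_pos (by linarith : (0:ℝ) < 4/9 - t)
        (by linarith : (0:ℝ) < 9/4 - (w.re^2 + w.im^2)), sq_nonneg t, ht0.le]
  have : ‖z‖ < 1 := by
    have h1 := Complex.sq_norm z
    nlinarith [norm_nonneg z]
  linarith [hcon]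
end

section
/- For the accelerated (heavy-ball/Nesterov family) optimization method Ĝopt(z) = −α((1+γ)z − γ)/((z−1)(z−β)) with α > 0, 0 ≤ β < 1, γ ≥ 0: Ĝopt has a simple pole at z=1, (z−1)Ĝopt(z) = −α((1+γ)z−γ)/(z−β) is stable, Ĝopt is strictly proper, and for all sufficiently small ε > 0 the two zeros of 1 − εĜopt(z) (roots of (z−1)(z−β) + εα((1+γ)z − γ)) lie in the open unit disk. -/
/-!
The first three claims are direct computations with the factored denominator
`(z - 1)(z - β)`. For the fourth, the perturbed denominator is the real monic quadratic
`z² + b z + c` with `b = εα(1+γ) - (1+β)` and `c = β - εαγ`, and the Jury conditions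
`1 + b + c > 0`, `1 - b + c > 0`, `c < 1` place both of its roots in the open unit disk.
Here `1 + b + c = εα > 0` for every `ε > 0`, which is the root near `1` moving inside,
while `1 - b + c = 2(1+β) - εα(1+2γ)` stays positive for `ε < 2(1+β)/(α(1+2γ))`.
-/

open Polynomial

theorem Polynomial.rootMultiplicity_X_sub_C_mul_X_sub_C_of_ne {R : Type*} [CommRing R]
    [IsDomain R] {a b : R} (h : a ≠ b) :
    ((X - C a) * (X - C b)).rootMultiplicity a = 1 := by
  rw [mul_comm, ← pow_one (X - C a), rootMultiplicity_mul_X_sub_C_pow (X_sub_C_ne_zero b),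
    rootMultiplicity_eq_zero (by simpa [sub_eq_zero] using h)]

section JuryCriterion

variable {b c : ℝ}

theorem abs_lt_one_of_sq_add_mul_add_eq_zero {x : ℝ} (hx : x ^ 2 + b * x + c = 0)
    (h₁ : 0 < 1 + b + c) (h₂ : 0 < 1 - b + c) (hc : c < 1) : |x| < 1 := by
  rw [abs_lt]
  constructor <;> nlinarith [sq_nonneg (x + 1), sq_nonneg (x - 1)]

theorem Complex.norm_lt_one_of_sq_add_mul_add_eq_zero {z : ℂ}
    (hz : z ^ 2 + b * z + c = 0) (h₁ : 0 < 1 + b + c) (h₂ : 0 < 1 - b + c) (hc : c < 1) :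
    ‖z‖ < 1 := by
  have hre : z.re ^ 2 - z.im ^ 2 + b * z.re + c = 0 := by
    simpa [sq] using congrArg Complex.re hz
  have him : z.im * (2 * z.re + b) = 0 := by
    linear_combination (by simpa [sq] using congrArg Complex.im hz : _ = (0 : ℝ))
  rcases mul_eq_zero.mp him with hy | hx
  · rw [← Complex.abs_re_eq_norm.mpr hy]
    exact abs_lt_one_of_sq_add_mul_add_eq_zero (by simpa [hy] using hre) h₁ h₂ hc
  · -- a non-real root has `‖z‖² = c`, the product of the conjugate pair
    have hnorm : ‖z‖ ^ 2 = c := by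
      rw [Complex.sq_norm, Complex.normSq_apply]
      nlinarith
    exact (sq_lt_one_iff₀ (norm_nonneg z)).mp (hnorm ▸ hc)

end JuryCriterion

theorem norm_lt_one_of_accelerated_char_poly_eq_zero {α β γ ε : ℝ} (hα : 0 < α) (hβ1 : β < 1)
    (hγ : 0 ≤ γ) (hε : 0 < ε) (hε₀ : ε < 2 * (1 + β) / (α * (1 + 2 * γ)))
    {z : ℂ} (hz : (z - 1) * (z - β) + ε * α * ((1 + γ) * z - γ) = 0) : ‖z‖ < 1 := by
  have hεα : ε * α * (1 + 2 * γ) < 2 * (1 + β) := by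
    rwa [lt_div_iff₀ (by positivity), ← mul_assoc] at hε₀
  refine Complex.norm_lt_one_of_sq_add_mul_add_eq_zero
    (b := ε * α * (1 + γ) - (1 + β)) (c := β - ε * α * γ) ?_ ?_ ?_ ?_
  · push_cast
    linear_combination hz
  · linarith [mul_pos hε hα]
  · linarith
  · linarith [mul_nonneg (mul_pos hε hα).le hγ]

/-- For the accelerated optimization method
`Ĝopt(z) = −α((1+γ)z − γ)/((z−1)(z−β))` with `α > 0`, `0 ≤ β < 1`, `γ ≥ 0`:
`Ĝopt` has a simple pole at `z = 1`; `(z−1)Ĝopt(z) = −α((1+γ)z−γ)/(z−β)` is stable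
(its only pole `β` lies in the open unit disk); `Ĝopt` is strictly proper; and for
all sufficiently small `ε > 0` both zeros of `1 − εĜopt(z)` (the roots of
`(z−1)(z−β) + εα((1+γ)z − γ)`) lie in the open unit disk. -/
theorem accelerated_method_is_optimization_method (α β γ : ℝ)
    (hα : 0 < α) (hβ0 : 0 ≤ β) (hβ1 : β < 1) (hγ : 0 ≤ γ) :
    let q : Polynomial ℂ := (Polynomial.X - 1) * (Polynomial.X - Polynomial.C (β : ℂ))
    let p : Polynomial ℂ :=
      Polynomial.C (-(α : ℂ)) * (Polynomial.C ((1 + γ : ℝ) : ℂ) * Polynomial.X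
        - Polynomial.C ((γ : ℝ) : ℂ))
    (q.eval 1 = 0 ∧ q.rootMultiplicity 1 = 1) ∧
    (∀ z : ℂ, z - (β : ℂ) = 0 → ‖z‖ < 1) ∧
    p.natDegree < q.natDegree ∧
    (∃ ε₀ : ℝ, 0 < ε₀ ∧ ∀ ε : ℝ, 0 < ε → ε < ε₀ →
      ∀ z : ℂ, (z - 1) * (z - (β : ℂ)) + (ε : ℂ) * (α : ℂ) * (((1 + γ : ℝ) : ℂ) * z - (γ : ℝ)) = 0 →
        ‖z‖ < 1) := by
  intro q p
  have hβ_ne_one : (1 : ℂ) ≠ β := by exact_mod_cast hβ1.ne'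
  refine ⟨⟨by simp [q], ?_⟩, ?_, ?_, ⟨2 * (1 + β) / (α * (1 + 2 * γ)), by positivity, fun ε hε hε₀ z hz => ?_⟩⟩
  · simpa [q] using rootMultiplicity_X_sub_C_mul_X_sub_C_of_ne hβ_ne_one
  · intro z hz
    rwa [sub_eq_zero.mp hz, Complex.norm_of_nonneg hβ0]
  · have hq : q.natDegree = 2 := by simp only [q]; compute_degree!
    have hp : p.natDegree ≤ 1 := by simp only [p]; compute_degree
    omega
  · exact norm_lt_one_of_accelerated_char_poly_eq_zero hα hβ1 hγ hε hε₀
      (by exact_mod_cast hz)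
end
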